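/- The determinant of any n×n matrix with entries in {0,1} (viewed over the reals) satisfies |det(C)| ≤ (n+1)^{(n+1)/2} / 2^n. -/

import Mathlib

/-!
Border a 0/1 matrix `C` by a row and a column of ones and replace its entries `c` by `1 - 2c`:
this gives an `(n+1) × (n+1)` matrix of signs whose determinant is `(-2)^n det C`.
For a sign matrix `M` of size `N`, `M Mᵀ` is positive semidefinite with trace `N²`, so AM-GM on its
eigenvalues gives `det (M Mᵀ) ≤ N^N`, i.e. Hadamard's bound `|det M| ≤ N^(N/2)`.
-/

open Matrix Finset

theorem Real.prod_le_sum_div_card_pow {ι : Type*} [Fintype ι] (z : ι → ℝ) (hz : ∀ i, 0 ≤ z i) :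
    ∏ i, z i ≤ ((∑ i, z i) / Fintype.card ι) ^ Fintype.card ι := by
  rcases isEmpty_or_nonempty ι with hι | hι
  · simp
  set N := Fintype.card ι
  have hN : N ≠ 0 := Fintype.card_ne_zero
  have hgm := Real.geom_mean_le_arith_mean_weighted univ (fun _ => (N : ℝ)⁻¹) z
    (fun _ _ => by positivity) (by simp [N, hN]) (fun i _ => hz i)
  calc ∏ i, z i = (∏ i, z i ^ (N⁻¹ : ℝ)) ^ N := by
        rw [← prod_pow]
        exact prod_congr rfl fun i _ => (Real.rpow_inv_natCast_pow (hz i) hN).symm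
    _ ≤ (∑ i, (N : ℝ)⁻¹ * z i) ^ N :=
        pow_le_pow_left₀ (prod_nonneg fun i _ => Real.rpow_nonneg (hz i) _) hgm N
    _ = ((∑ i, z i) / N) ^ N := by rw [← mul_sum, inv_mul_eq_div]

variable {n : Type*}

section SignMatrix

variable [Fintype n] [DecidableEq n]

theorem Matrix.PosSemidef.det_le_trace_div_card_pow {A : Matrix n n ℝ} (hA : A.PosSemidef) :
    A.det ≤ (A.trace / Fintype.card n) ^ Fintype.card n := by
  rw [hA.isHermitian.det_eq_prod_eigenvalues, hA.isHermitian.trace_eq_sum_eigenvalues]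
  simpa using Real.prod_le_sum_div_card_pow _ hA.eigenvalues_nonneg

theorem Matrix.det_sq_le_sum_sq_div_card_pow (M : Matrix n n ℝ) :
    M.det ^ 2 ≤ ((∑ i, ∑ j, M i j ^ 2) / Fintype.card n) ^ Fintype.card n := by
  have htrace : (M * Mᴴ).trace = ∑ i, ∑ j, M i j ^ 2 := by
    simp [trace, mul_apply, sq]
  calc M.det ^ 2 = (M * Mᴴ).det := by simp [det_mul, sq]
    _ ≤ _ := (posSemidef_self_mul_conjTranspose M).det_le_trace_div_card_pow
    _ = _ := by rw [htrace]

theorem Matrix.abs_det_le_of_forall_eq_one_or_neg_one (M : Matrix n n ℝ)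
    (hM : ∀ i j, M i j = 1 ∨ M i j = -1) :
    |M.det| ≤ (Fintype.card n : ℝ) ^ ((Fintype.card n : ℝ) / 2) := by
  set N := Fintype.card n
  have hsum : ∑ i, ∑ j, M i j ^ 2 = (N : ℝ) * N := by
    have hsq : ∀ i j, M i j ^ 2 = 1 := fun i j => by rcases hM i j with h | h <;> simp [h]
    simp [hsq, N]
  apply abs_le_of_sq_le_sq _ (by positivity)
  rw [← Real.rpow_mul_natCast N.cast_nonneg, Nat.cast_ofNat, div_mul_cancel₀ _ two_ne_zero,
    Real.rpow_natCast]
  calc M.det ^ 2 ≤ _ := M.det_sq_le_sum_sq_div_card_pow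
    _ = (N : ℝ) ^ N := by rw [hsum, mul_self_div_self]

end SignMatrix

section BorderedSignMatrix

variable {R : Type*} [CommRing R]

def Matrix.borderedSignMatrix (C : Matrix n n R) : Matrix (Unit ⊕ n) (Unit ⊕ n) R :=
  fromBlocks 1 (of fun _ _ => 1) (of fun _ _ => 1) (of fun i j => 1 - 2 * C i j)

theorem Matrix.borderedSignMatrix_eq_one_or_neg_one {C : Matrix n n R}
    (hC : ∀ i j, C i j = 0 ∨ C i j = 1) (i j : Unit ⊕ n) :
    borderedSignMatrix C i j = 1 ∨ borderedSignMatrix C i j = -1 := by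
  rcases i with i | i <;> rcases j with j | j <;>
    simp only [borderedSignMatrix, fromBlocks_apply₁₁, fromBlocks_apply₁₂, fromBlocks_apply₂₁,
      fromBlocks_apply₂₂, of_apply, one_apply_eq, true_or]
  rcases hC i j with h | h <;> norm_num [h]

-- The Schur complement of the corner entry `1` is `(1 - 2C) - 1 = -2C`.
theorem Matrix.det_borderedSignMatrix [Fintype n] [DecidableEq n] (C : Matrix n n R) :
    (borderedSignMatrix C).det = (-2) ^ Fintype.card n * C.det := by
  have hschur : (of fun i j => 1 - 2 * C i j) -
      of (fun (_ : n) (_ : Unit) => (1 : R)) * of (fun (_ : Unit) (_ : n) => (1 : R)) =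
        (-2 : R) • C := by
    ext i j
    simp [mul_apply]
  rw [borderedSignMatrix, det_fromBlocks_one₁₁, hschur, det_smul]

end BorderedSignMatrix

theorem binary_matrix_det_bound (n : ℕ) (C : Matrix (Fin n) (Fin n) ℝ)
    (hC : ∀ i j, C i j = 0 ∨ C i j = 1) :
    |C.det| ≤ ((n : ℝ) + 1) ^ (((n : ℝ) + 1) / 2) / 2 ^ n := by
  have hbound := abs_det_le_of_forall_eq_one_or_neg_one _ (borderedSignMatrix_eq_one_or_neg_one hC)
  rw [det_borderedSignMatrix, abs_mul, abs_pow, abs_neg, abs_two, Fintype.card_fin] at hbound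
  simp only [Fintype.card_sum, Fintype.card_unit, Fintype.card_fin, Nat.cast_add, Nat.cast_one,
    add_comm (1 : ℝ)] at hbound
  rw [le_div_iff₀ (by positivity), mul_comm]
  exact hbound
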